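/- Let $w : \mathbb{R} \to \mathbb{R}$ be twice differentiable with $0 < L \leq w \leq U$ and $|w''| \leq M$ everywhere, and let $\omega > 0$, $\sigma = \omega\sqrt{\tau}$. Define $I(x_1, x_2; \tau) = \int_{\mathbb{R}} k_{\sigma/\sqrt{2}}\big(z;\tfrac{1}{2}(x_1+x_2)\big)\, \frac{w(z)}{\int k_\sigma(y;z) w(y)\,dy}\, dz$. If $0 < \tau < \tau_0 < \frac{2L}{M\omega^2}$, then $1 - \frac{M\omega^2\tau}{2L} \leq I(x_1,x_2;\tau) \leq 1 + \frac{M\omega^2\tau}{2L - M\omega^2\tau_0}$ for all $x_1, x_2 \in \mathbb{R}$. -/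

import Mathlib

open MeasureTheory Real

/-- Gaussian density with mean `m` and standard deviation `σ`, evaluated at `y`. -/
noncomputable def gauss (σ m y : ℝ) : ℝ :=
  (Real.sqrt (2 * Real.pi) * σ)⁻¹ * Real.exp (-(y - m) ^ 2 / (2 * σ ^ 2))

/-- The integral `I(x₁, x₂; τ)` with kernel standard deviation `σ(τ) = ω √τ`. -/
noncomputable def Ifun (w : ℝ → ℝ) (ω τ x₁ x₂ : ℝ) : ℝ :=
  ∫ z : ℝ, gauss (ω * Real.sqrt τ / Real.sqrt 2) ((x₁ + x₂) / 2) z *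
    (w z / ∫ y : ℝ, gauss (ω * Real.sqrt τ) z y * w y)

/-!
The inner integral `J z = ∫ k_σ(y; z) w(y) dy` is the expectation of `w` under a Gaussian of mean
`z` and variance `σ² = ω² τ`. Since `w + M t² / 2` and `-w + M t² / 2` are convex, `w` differs from
its tangent line at `z` by at most `M (y - z)² / 2`; the linear term has zero mean, so
`|J z - w z| ≤ M ω² τ / 2`. With `L ≤ w z` this pins `w z / J z` between the two constants, and the
outer integral, an average against a Gaussian probability density, stays between them.
-/

open ProbabilityTheory

lemma ConvexOn.tangent_le_of_hasDerivAt {f : ℝ → ℝ} {f' x y : ℝ} {S : Set ℝ}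
    (hf : ConvexOn ℝ S f) (hx : x ∈ S) (hy : y ∈ S) (hd : HasDerivAt f f' x) :
    f x + f' * (y - x) ≤ f y := by
  rcases lt_trichotomy x y with hxy | rfl | hyx
  · have h := hf.le_slope_of_hasDerivAt hx hy hxy hd
    rw [slope_def_field, le_div_iff₀ (sub_pos.2 hxy)] at h
    linarith
  · simp
  · have h := hf.slope_le_of_hasDerivAt hy hx hyx hd
    rw [slope_def_field, div_le_iff₀ (sub_pos.2 hyx)] at h
    linarith

section Taylor

variable {f f' f'' : ℝ → ℝ} {M : ℝ}

lemma neg_le_taylor_remainder (hf' : ∀ x, HasDerivAt f (f' x) x)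
    (hf'' : ∀ x, HasDerivAt f' (f'' x) x) (hM : ∀ x, |f'' x| ≤ M) (z y : ℝ) :
    -(M / 2 * (y - z) ^ 2) ≤ f y - f z - f' z * (y - z) := by
  have hsq : ∀ x, HasDerivAt (fun t => M / 2 * t ^ 2) (M * x) x := fun x =>
    ((hasDerivAt_pow 2 x).const_mul (M / 2)).congr_deriv (by ring)
  have hconv : ConvexOn ℝ Set.univ (fun t => f t + M / 2 * t ^ 2) := by
    refine convexOn_of_hasDerivWithinAt2_nonneg convex_univ (f' := fun t => f' t + M * t)
      (f'' := fun t => f'' t + M) ?_ (fun x _ => ?_) (fun x _ => ?_) (fun x _ => ?_)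
    · exact (Differentiable.continuous fun x => (hf' x).differentiableAt).continuousOn.add
        (by fun_prop)
    · exact ((hf' x).add (hsq x)).hasDerivWithinAt
    · exact ((hf'' x).add (by simpa using (hasDerivAt_id x).const_mul M)).hasDerivWithinAt
    · linarith [(abs_le.1 (hM x)).1]
  have h := hconv.tangent_le_of_hasDerivAt (Set.mem_univ z) (Set.mem_univ y)
    ((hf' z).add (hsq z))
  linear_combination h

lemma abs_taylor_remainder_le (hf' : ∀ x, HasDerivAt f (f' x) x)
    (hf'' : ∀ x, HasDerivAt f' (f'' x) x) (hM : ∀ x, |f'' x| ≤ M) (z y : ℝ) :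
    |f y - f z - f' z * (y - z)| ≤ M / 2 * (y - z) ^ 2 := by
  have h := neg_le_taylor_remainder (fun x => (hf' x).neg) (fun x => (hf'' x).neg)
    (fun x => by simpa using hM x) z y
  simp only [Pi.neg_apply] at h
  exact abs_le.2 ⟨neg_le_taylor_remainder hf' hf'' hM z y, by linarith⟩

end Taylor

lemma abs_integral_sub_apply_mean_le {μ : Measure ℝ} [IsProbabilityMeasure μ] {f : ℝ → ℝ}
    {a K : ℝ} (hf : AEStronglyMeasurable f μ) (hid : MemLp id 2 μ)
    (htaylor : ∀ y, |f y - f μ[id] - a * (y - μ[id])| ≤ K * (y - μ[id]) ^ 2) :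
    |∫ y, f y ∂μ - f μ[id]| ≤ K * Var[id; μ] := by
  set m := μ[id]
  have hid1 : Integrable (fun y => y) μ := hid.integrable one_le_two
  have hcentered : Integrable (fun y => a * (y - m)) μ := (hid1.sub (integrable_const m)).const_mul a
  have hlin : Integrable (fun y => f m + a * (y - m)) μ := (integrable_const _).add hcentered
  have hsq : Integrable (fun y => K * (y - m) ^ 2) μ :=
    ((hid.sub (memLp_const m)).integrable_sq).const_mul K
  have hrem : Integrable (fun y => f y - (f m + a * (y - m))) μ :=
    hsq.mono' (hf.sub hlin.aestronglyMeasurable)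
      (ae_of_all _ fun y => by simpa only [Real.norm_eq_abs, sub_sub] using htaylor y)
  have hlin_int : ∫ y, (f m + a * (y - m)) ∂μ = f m := by
    rw [integral_add (integrable_const _) hcentered, integral_const_mul,
      integral_sub hid1 (integrable_const m)]
    simp [m]
  calc |∫ y, f y ∂μ - f m| = |∫ y, (f y - (f m + a * (y - m))) ∂μ| := by
        rw [integral_sub (hrem.add hlin |>.congr (ae_of_all _ fun y => by simp)) hlin, hlin_int]
    _ ≤ ∫ y, K * (y - m) ^ 2 ∂μ := by
        refine (abs_integral_le_integral_abs).trans (integral_mono hrem.abs hsq fun y => ?_)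
        simpa only [sub_sub] using htaylor y
    _ = K * Var[id; μ] := by
        rw [integral_const_mul, variance_eq_integral measurable_id.aemeasurable]
        rfl

lemma integral_mem_Icc_of_forall_mem_Icc {α : Type*} [MeasurableSpace α] {μ : Measure α}
    [IsProbabilityMeasure μ] {f : α → ℝ} {a b : ℝ} (hf : AEStronglyMeasurable f μ)
    (hab : ∀ x, f x ∈ Set.Icc a b) : ∫ x, f x ∂μ ∈ Set.Icc a b :=
  (convex_Icc a b).integral_mem isClosed_Icc (ae_of_all _ hab) <|
    Integrable.of_bound hf (max |a| |b|) <| ae_of_all _ fun x =>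
      abs_le_max_abs_abs (hab x).1 (hab x).2

lemma div_mem_Icc_of_abs_sub_le {x j L a a₀ : ℝ} (hx : L ≤ x) (ha : 0 ≤ a) (haa₀ : a ≤ a₀)
    (ha₀ : a₀ < 2 * L) (hj : |j - x| ≤ a / 2) :
    x / j ∈ Set.Icc (1 - a / (2 * L)) (1 + a / (2 * L - a₀)) := by
  obtain ⟨hj₁, hj₂⟩ := abs_le.1 hj
  have hj : 0 < j := by linarith
  have hL : 0 < 2 * L := by linarith
  have hL₀ : 0 < 2 * L - a₀ := by linarith
  constructor
  · rw [one_sub_div hL.ne', div_le_div_iff₀ hL hj]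
    nlinarith [mul_le_mul_of_nonneg_left hj₂ (by linarith : 0 ≤ 2 * L - a),
      mul_nonneg ha (by linarith : 0 ≤ x - L + a / 2)]
  · rw [one_add_div hL₀.ne', div_le_div_iff₀ hj hL₀]
    nlinarith [mul_le_mul_of_nonneg_left hj₁ (by linarith : 0 ≤ 2 * L - a₀ + a),
      mul_nonneg ha (by linarith : 0 ≤ x - L + a₀ / 2 - a / 2)]

lemma stronglyMeasurable_integral_gauss_mul (σ : ℝ) {f : ℝ → ℝ} (hf : Continuous f) :
    StronglyMeasurable fun z => ∫ y, gauss σ z y * f y := by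
  have hcont : Continuous fun p : ℝ × ℝ => gauss σ p.1 p.2 * f p.2 := by
    unfold gauss
    fun_prop
  exact hcont.stronglyMeasurable.integral_prod_right'

section Gauss

variable {σ : ℝ}

lemma gauss_eq_gaussianPDFReal (hσ : 0 < σ) (m : ℝ) :
    gauss σ m = gaussianPDFReal m (σ ^ 2).toNNReal := by
  ext y
  have hσ2 : ((σ ^ 2).toNNReal : ℝ) = σ ^ 2 := Real.coe_toNNReal _ (sq_nonneg σ)
  rw [gauss, gaussianPDFReal, hσ2, Real.sqrt_mul (by positivity) (σ ^ 2), Real.sqrt_sq hσ.le]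

lemma integral_gauss_mul (hσ : 0 < σ) (m : ℝ) (f : ℝ → ℝ) :
    ∫ y, gauss σ m y * f y = ∫ y, f y ∂gaussianReal m (σ ^ 2).toNNReal := by
  rw [integral_gaussianReal_eq_integral_smul (by simpa using hσ.ne'), gauss_eq_gaussianPDFReal hσ]
  rfl

lemma abs_integral_gauss_mul_sub_le {w w' w'' : ℝ → ℝ} {M : ℝ} (hσ : 0 < σ)
    (hw' : ∀ x, HasDerivAt w (w' x) x) (hw'' : ∀ x, HasDerivAt w' (w'' x) x)
    (hM : ∀ x, |w'' x| ≤ M) (z : ℝ) :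
    |(∫ y, gauss σ z y * w y) - w z| ≤ M / 2 * σ ^ 2 := by
  have hmean : (gaussianReal z (σ ^ 2).toNNReal)[id] = z := integral_id_gaussianReal
  have h := abs_integral_sub_apply_mean_le (μ := gaussianReal z (σ ^ 2).toNNReal)
    (Differentiable.continuous fun x => (hw' x).differentiableAt).aestronglyMeasurable
    (memLp_id_gaussianReal 2) (a := w' z)
    (by rw [hmean]; exact abs_taylor_remainder_le hw' hw'' hM z)
  rwa [hmean, variance_id_gaussianReal, Real.coe_toNNReal _ (sq_nonneg σ),
    ← integral_gauss_mul hσ] at h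

end Gauss

theorem I_bounds (w w' w'' : ℝ → ℝ) (L U M ω τ τ₀ : ℝ)
    (hw' : ∀ x, HasDerivAt w (w' x) x)
    (hw'' : ∀ x, HasDerivAt w' (w'' x) x)
    (hM : ∀ x, |w'' x| ≤ M)
    (hL : 0 < L) (hLU : ∀ x, L ≤ w x ∧ w x ≤ U)
    (hω : 0 < ω) (hτ : 0 < τ) (hττ₀ : τ < τ₀) (hτ₀small : τ₀ < 2 * L / (M * ω ^ 2))
    (x₁ x₂ : ℝ) :
    1 - M * ω ^ 2 * τ / (2 * L) ≤ Ifun w ω τ x₁ x₂ ∧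
      Ifun w ω τ x₁ x₂ ≤ 1 + M * ω ^ 2 * τ / (2 * L - M * ω ^ 2 * τ₀) := by
  set σ := ω * √τ
  have hσ : 0 < σ := mul_pos hω (Real.sqrt_pos.2 hτ)
  have hσ2 : M / 2 * σ ^ 2 = M * ω ^ 2 * τ / 2 := by
    rw [mul_pow, Real.sq_sqrt hτ.le]; ring
  have hMω : 0 < M * ω ^ 2 :=
    (div_pos_iff_of_pos_left (mul_pos two_pos hL)).1 ((hτ.trans hττ₀).trans hτ₀small)
  have ha₀ : M * ω ^ 2 * τ₀ < 2 * L := by rwa [lt_div_iff₀ hMω, mul_comm] at hτ₀small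
  have hratio : ∀ z, w z / (∫ y, gauss σ z y * w y) ∈
      Set.Icc (1 - M * ω ^ 2 * τ / (2 * L)) (1 + M * ω ^ 2 * τ / (2 * L - M * ω ^ 2 * τ₀)) :=
    fun z => div_mem_Icc_of_abs_sub_le (hLU z).1 (mul_pos hMω hτ).le
      (mul_le_mul_of_nonneg_left hττ₀.le hMω.le) ha₀
      (hσ2 ▸ abs_integral_gauss_mul_sub_le hσ hw' hw'' hM z)
  have hw : Continuous w := Differentiable.continuous fun x => (hw' x).differentiableAt
  rw [Ifun, integral_gauss_mul (div_pos hσ (by positivity))]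
  exact integral_mem_Icc_of_forall_mem_Icc
    (hw.measurable.div (stronglyMeasurable_integral_gauss_mul σ hw).measurable).aestronglyMeasurable
    hratio
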